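/- Probabilistic safety via stochastic barrier functions: Consider a discrete-time stochastic dynamical system on a compact Borel set 𝒳 ⊆ ℝ^m given by a Borel-measurable dynamics function f : ℝ^m × ℝ^n × ℝ^p → ℝ^m, a Borel-measurable control policy π : ℝ^m → ℝ^n, and a probability distribution d on ℝ^p, with f(x, π(x), w) ∈ 𝒳 whenever x ∈ 𝒳 and w lies in the support of d. Let 𝒳₀, 𝒳_u ⊆ 𝒳 be Borel sets and p ∈ [0,1). On a probability space (Ω, ℱ, ℙ), let (ω_t)_{t∈ℕ} be an independent sequence of ℝ^p-valued random variables each with law d, fix x₀ ∈ 𝒳₀, and define (x_t)_{t∈ℕ} by x_{t+1} = f(x_t, π(x_t), ω_t). Suppose there exists a continuous function V : 𝒳 → ℝ with: V(x) ≥ 0 for all x ∈ 𝒳; V(x) ≤ 1 for all x ∈ 𝒳₀; V(x) ≥ 1/(1−p) for all x ∈ 𝒳_u; and ∫ V(f(x, π(x), w)) dd(w) ≤ V(x) for every x ∈ 𝒳 with V(x) ≤ 1/(1−p). Then ℙ[ x_t ∉ 𝒳_u for all t ∈ ℕ ] ≥ p. -/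

import Mathlib

/-!
Stop the chain the first time `V` reaches `c = 1 / (1 - p)` and truncate `V` at `c`. The state at
time `t` is a function of the noise before `t`, hence independent of the fresh noise, so one step
of expectation is an integral against `d`; below level `c` the drift condition then makes
`E[min (V x_t) c]` along the stopped chain non-increasing, so it stays below `V x₀ ≤ 1`. By
Markov's inequality the stopped chain has reached level `c` by time `t` with probability at most
`1 / c = 1 - p`. These events increase to the event that the original chain ever reaches level
`c`, which contains every visit to the unsafe set.
-/

open MeasureTheory ProbabilityTheory

/-- The (topological) support of a measure: the set of points all of whose open
neighbourhoods have positive measure. -/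
def measureSupport {E : Type*} [TopologicalSpace E] [MeasurableSpace E]
    (d : Measure E) : Set E :=
  {w | ∀ U : Set E, IsOpen U → w ∈ U → 0 < d U}

lemma measureSupport_eq_support {E : Type*} [TopologicalSpace E] [MeasurableSpace E]
    (d : Measure E) : measureSupport d = d.support := by
  simp only [measureSupport, Measure.support_eq_forall_isOpen]
  grind

lemma ae_mem_measureSupport {E : Type*} [TopologicalSpace E] [HereditarilyLindelofSpace E]
    [MeasurableSpace E] (d : Measure E) : ∀ᵐ w ∂d, w ∈ measureSupport d :=
  measureSupport_eq_support d ▸ Measure.support_mem_ae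

lemma ContinuousOn.measurable_indicator {E : Type*} [TopologicalSpace E] [MeasurableSpace E]
    [OpensMeasurableSpace E] {f : E → ℝ} {s : Set E} (hf : ContinuousOn f s)
    (hs : MeasurableSet s) : Measurable (s.indicator f) := by
  classical
  rw [← Set.piecewise_eq_indicator]
  exact hf.measurable_piecewise continuousOn_const hs

section RecursiveProcess

variable {Ω X W : Type*}

def recursiveProcess (G : X → W → X) (x₀ : X) (ω : ℕ → Ω → W) : ℕ → Ω → X
  | 0 => fun _ => x₀
  | t + 1 => fun ϖ => G (recursiveProcess G x₀ ω t ϖ) (ω t ϖ)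

variable {G : X → W → X} {x₀ : X} {ω : ℕ → Ω → W}

lemma recursiveProcess_congr {G' : X → W → X} {ϖ : Ω}
    (h : ∀ t, G' (recursiveProcess G' x₀ ω t ϖ) (ω t ϖ) = G (recursiveProcess G' x₀ ω t ϖ) (ω t ϖ))
    (t : ℕ) : recursiveProcess G' x₀ ω t ϖ = recursiveProcess G x₀ ω t ϖ := by
  induction t with
  | zero => rfl
  | succ t ih => exact (h t).trans (congrArg (G · (ω t ϖ)) ih)

lemma eq_recursiveProcess {x : ℕ → Ω → X} (hx0 : ∀ ϖ, x 0 ϖ = x₀)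
    (hx : ∀ t ϖ, x (t + 1) ϖ = G (x t ϖ) (ω t ϖ)) : x = recursiveProcess G x₀ ω := by
  funext t ϖ
  induction t with
  | zero => exact hx0 ϖ
  | succ t ih => rw [hx, ih]; rfl

variable {mΩ : MeasurableSpace Ω} [mW : MeasurableSpace W]

lemma ae_recursiveProcess_mem {μ : Measure Ω} {d : Measure W} (hω : ∀ t, Measurable (ω t))
    (hlaw : ∀ t, μ.map (ω t) = d) {K : Set X} (hGK : ∀ᵐ w ∂d, ∀ x ∈ K, G x w ∈ K) (hx₀ : x₀ ∈ K)
    (t : ℕ) : ∀ᵐ ϖ ∂μ, recursiveProcess G x₀ ω t ϖ ∈ K := by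
  induction t with
  | zero => exact .of_forall fun _ => hx₀
  | succ t ih =>
    have hGK_t : ∀ᵐ ϖ ∂μ, ∀ x ∈ K, G x (ω t ϖ) ∈ K :=
      ae_of_ae_map (hω t).aemeasurable (hlaw t ▸ hGK)
    filter_upwards [ih, hGK_t] with ϖ hK hGK_ϖ
    exact hGK_ϖ _ hK

variable [MeasurableSpace X]

lemma measurable_recursiveProcess_past (hG : Measurable (Function.uncurry G)) (t : ℕ) :
    Measurable[⨆ i ∈ Set.Iio t, mW.comap (ω i)] (recursiveProcess G x₀ ω t) := by
  induction t with
  | zero => exact measurable_const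
  | succ t ih =>
    have hle : (⨆ i ∈ Set.Iio t, mW.comap (ω i)) ≤ ⨆ i ∈ Set.Iio (t + 1), mW.comap (ω i) :=
      iSup₂_mono' fun i hi => ⟨i, Nat.lt_succ_of_lt hi, le_rfl⟩
    have hωt : Measurable[⨆ i ∈ Set.Iio (t + 1), mW.comap (ω i)] (ω t) :=
      Measurable.of_comap_le (le_iSup₂ (f := fun i (_ : i ∈ Set.Iio (t + 1)) => mW.comap (ω i))
        t (Nat.lt_succ_self t))
    exact hG.comp ((ih.mono hle le_rfl).prodMk hωt)

lemma measurable_recursiveProcess (hG : Measurable (Function.uncurry G))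
    (hω : ∀ t, Measurable (ω t)) (t : ℕ) : Measurable (recursiveProcess G x₀ ω t) :=
  (measurable_recursiveProcess_past hG t).mono (iSup₂_le fun i _ => (hω i).comap_le) le_rfl

lemma indepFun_recursiveProcess {μ : Measure Ω} (hG : Measurable (Function.uncurry G))
    (hω : ∀ t, Measurable (ω t)) (hind : iIndepFun ω μ) (t : ℕ) :
    IndepFun (recursiveProcess G x₀ ω t) (ω t) μ := by
  have hpast_now := indep_iSup_of_disjoint (fun i => (hω i).comap_le)
    ((iIndepFun_iff_iIndep _ _ _).1 hind) (S := Set.Iio t) (T := {t}) (by simp)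
  rw [IndepFun_iff_Indep]
  refine indep_of_indep_of_le_right (indep_of_indep_of_le_left hpast_now
    (measurable_recursiveProcess_past hG t).comap_le) ?_
  exact le_iSup₂ (f := fun i (_ : i ∈ ({t} : Set ℕ)) => mW.comap (ω i)) t rfl

lemma ProbabilityTheory.IndepFun.integral_comp_eq_integral_integral {μ : Measure Ω}
    [IsFiniteMeasure μ] {Y : Ω → X} {ξ : Ω → W} (hYξ : IndepFun Y ξ μ) (hY : Measurable Y)
    (hξ : Measurable ξ) {H : X × W → ℝ} (hH : Integrable H ((μ.map Y).prod (μ.map ξ))) :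
    ∫ ϖ, H (Y ϖ, ξ ϖ) ∂μ = ∫ ϖ, ∫ w, H (Y ϖ, w) ∂(μ.map ξ) ∂μ := by
  have hjoint := hYξ.map_prod_eq_prod_map_map hY.aemeasurable hξ.aemeasurable
  calc ∫ ϖ, H (Y ϖ, ξ ϖ) ∂μ = ∫ z, H z ∂((μ.map Y).prod (μ.map ξ)) := by
        rw [← hjoint, integral_map (hY.prodMk hξ).aemeasurable (hjoint ▸ hH).aestronglyMeasurable]
    _ = ∫ x, ∫ w, H (x, w) ∂(μ.map ξ) ∂(μ.map Y) := integral_prod H hH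
    _ = ∫ ϖ, ∫ w, H (Y ϖ, w) ∂(μ.map ξ) ∂μ :=
        integral_map hY.aemeasurable hH.integral_prod_left.aestronglyMeasurable

lemma integral_comp_recursiveProcess_le {μ : Measure Ω} [IsProbabilityMeasure μ]
    {d : Measure W} [IsProbabilityMeasure d] (hG : Measurable (Function.uncurry G))
    (hω : ∀ t, Measurable (ω t)) (hind : iIndepFun ω μ) (hlaw : ∀ t, μ.map (ω t) = d)
    {h : X → ℝ} (hh : Measurable h) {C : ℝ} (hhC : ∀ x, ‖h x‖ ≤ C)
    (hdrift : ∀ t, ∀ᵐ ϖ ∂μ,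
      ∫ w, h (G (recursiveProcess G x₀ ω t ϖ) w) ∂d ≤ h (recursiveProcess G x₀ ω t ϖ))
    (t : ℕ) : ∫ ϖ, h (recursiveProcess G x₀ ω t ϖ) ∂μ ≤ h x₀ := by
  induction t with
  | zero => simp [recursiveProcess]
  | succ t ih =>
    set y := recursiveProcess G x₀ ω
    have hy := measurable_recursiveProcess (x₀ := x₀) hG hω t
    have hH : Integrable (fun z : X × W => h (G z.1 z.2)) ((μ.map (y t)).prod d) :=
      .of_bound (hh.comp hG).aestronglyMeasurable C (.of_forall fun _ => hhC _)
    have hstep : ∫ ϖ, h (y (t + 1) ϖ) ∂μ = ∫ ϖ, ∫ w, h (G (y t ϖ) w) ∂d ∂μ := by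
      rw [← hlaw t] at hH ⊢
      exact (indepFun_recursiveProcess hG hω hind t).integral_comp_eq_integral_integral hy (hω t) hH
    calc ∫ ϖ, h (y (t + 1) ϖ) ∂μ = ∫ ϖ, ∫ w, h (G (y t ϖ) w) ∂d ∂μ := hstep
      _ ≤ ∫ ϖ, h (y t ϖ) ∂μ := integral_mono_ae (hH.integral_prod_left.comp_measurable hy)
          (.of_bound (hh.comp hy).aestronglyMeasurable C (.of_forall fun _ => hhC _)) (hdrift t)
      _ ≤ h x₀ := ih

end RecursiveProcess

section Stopping

variable {Ω X W : Type*} {G : X → W → X} {A : Set X} {x₀ : X} {ω : ℕ → Ω → W}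

open Classical in
noncomputable def stopDynamics (G : X → W → X) (A : Set X) (x : X) (w : W) : X :=
  if x ∈ A then x else G x w

lemma monotone_recursiveProcess_stopDynamics_mem :
    Monotone fun t => {ϖ | recursiveProcess (stopDynamics G A) x₀ ω t ϖ ∈ A} := by
  refine monotone_nat_of_le_succ fun t ϖ (hϖ : _ ∈ A) => ?_
  show stopDynamics G A _ _ ∈ A
  rwa [stopDynamics, if_pos hϖ]

lemma exists_recursiveProcess_stopDynamics_mem {ϖ : Ω}
    (h : ∃ t, recursiveProcess G x₀ ω t ϖ ∈ A) :
    ∃ t, recursiveProcess (stopDynamics G A) x₀ ω t ϖ ∈ A := by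
  by_contra! hnever
  obtain ⟨t, ht⟩ := h
  have hagree : ∀ s, stopDynamics G A (recursiveProcess (stopDynamics G A) x₀ ω s ϖ) (ω s ϖ) =
      G (recursiveProcess (stopDynamics G A) x₀ ω s ϖ) (ω s ϖ) := fun s => if_neg (hnever s)
  exact hnever t (recursiveProcess_congr hagree t ▸ ht)

variable [MeasurableSpace W]

lemma integral_min_stopDynamics_le {d : Measure W} [IsProbabilityMeasure d] {B : X → ℝ}
    {c : ℝ} {x : X} (hBG : Integrable (fun w => B (G x w)) d)
    (hdrift : B x < c → ∫ w, B (G x w) ∂d ≤ B x) :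
    ∫ w, min (B (stopDynamics G {x | c ≤ B x} x w)) c ∂d ≤ min (B x) c := by
  by_cases hx : c ≤ B x
  · simp [stopDynamics, hx]
  rw [not_le] at hx
  have hstep : ∀ w, stopDynamics G {x | c ≤ B x} x w = G x w := fun w => if_neg hx.not_ge
  simp only [hstep, min_eq_left hx.le]
  calc ∫ w, min (B (G x w)) c ∂d ≤ ∫ w, B (G x w) ∂d :=
        integral_mono (hBG.inf (integrable_const c)) hBG fun w => min_le_left _ _
    _ ≤ B x := hdrift hx

variable [MeasurableSpace X]

lemma measurable_stopDynamics (hG : Measurable (Function.uncurry G)) (hA : MeasurableSet A) :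
    Measurable (Function.uncurry (stopDynamics G A)) :=
  Measurable.ite (measurable_fst hA) measurable_fst hG

end Stopping

lemma meas_ge_le_ofReal_integral_min_div {Ω : Type*} {mΩ : MeasurableSpace Ω} {μ : Measure Ω}
    [IsFiniteMeasure μ] {f : Ω → ℝ} (hf : Measurable f) (hf_nonneg : ∀ ϖ, 0 ≤ f ϖ) {c : ℝ}
    (hc : 0 < c) : μ {ϖ | c ≤ f ϖ} ≤ ENNReal.ofReal ((∫ ϖ, min (f ϖ) c ∂μ) / c) := by
  have hmin_nonneg : ∀ ϖ, 0 ≤ min (f ϖ) c := fun ϖ => le_min (hf_nonneg ϖ) hc.le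
  have hint : Integrable (fun ϖ => min (f ϖ) c) μ :=
    .of_bound (hf.min measurable_const).aestronglyMeasurable c (.of_forall fun ϖ => by
      rw [Real.norm_of_nonneg (hmin_nonneg ϖ)]; exact min_le_right _ _)
  have hmarkov := mul_meas_ge_le_integral_of_nonneg (.of_forall hmin_nonneg) hint c
  have hset : {ϖ | c ≤ min (f ϖ) c} = {ϖ | c ≤ f ϖ} := by ext; simp
  rw [hset] at hmarkov
  rw [ENNReal.le_ofReal_iff_toReal_le (measure_ne_top _ _)
    (div_nonneg (integral_nonneg hmin_nonneg) hc.le), ← measureReal_def, le_div_iff₀ hc]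
  linarith

lemma measure_le_comp_recursiveProcess_stopDynamics_le {Ω X W : Type*}
    {mΩ : MeasurableSpace Ω} [MeasurableSpace X] [MeasurableSpace W] {μ : Measure Ω}
    [IsProbabilityMeasure μ] {d : Measure W} [IsProbabilityMeasure d] {G : X → W → X}
    (hG : Measurable (Function.uncurry G)) {ω : ℕ → Ω → W} (hω : ∀ t, Measurable (ω t))
    (hind : iIndepFun ω μ) (hlaw : ∀ t, μ.map (ω t) = d) {K : Set X}
    (hGK : ∀ᵐ w ∂d, ∀ x ∈ K, G x w ∈ K) {x₀ : X} (hx₀ : x₀ ∈ K) {B : X → ℝ} (hB : Measurable B)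
    (hB_nonneg : ∀ x, 0 ≤ B x) {C : ℝ} (hB_le : ∀ x, B x ≤ C) {c : ℝ} (hc : 0 < c)
    (hdrift : ∀ x ∈ K, B x < c → ∫ w, B (G x w) ∂d ≤ B x) (t : ℕ) :
    μ {ϖ | c ≤ B (recursiveProcess (stopDynamics G {x | c ≤ B x}) x₀ ω t ϖ)} ≤
      ENNReal.ofReal (B x₀ / c) := by
  set G' := stopDynamics G {x | c ≤ B x}
  have hG' : Measurable (Function.uncurry G') :=
    measurable_stopDynamics hG (measurableSet_le measurable_const hB)
  have hG'K : ∀ᵐ w ∂d, ∀ x ∈ K, G' x w ∈ K := by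
    filter_upwards [hGK] with w hw x hx
    unfold G' stopDynamics
    split_ifs
    exacts [hx, hw x hx]
  have hdrift' : ∀ x ∈ K, ∫ w, min (B (G' x w)) c ∂d ≤ min (B x) c :=
    fun x hx => integral_min_stopDynamics_le
      (.of_bound (hB.comp (hG.comp measurable_prodMk_left)).aestronglyMeasurable C
        (.of_forall fun w => by rw [Real.norm_of_nonneg (hB_nonneg _)]; exact hB_le _))
      (hdrift x hx)
  have hE : ∫ ϖ, min (B (recursiveProcess G' x₀ ω t ϖ)) c ∂μ ≤ min (B x₀) c :=
    integral_comp_recursiveProcess_le hG' hω hind hlaw (hB.min measurable_const)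
      (fun x => by rw [Real.norm_of_nonneg (le_min (hB_nonneg x) hc.le)]; exact min_le_right _ _)
      (fun s => (ae_recursiveProcess_mem hω hlaw hG'K hx₀ s).mono fun ϖ hϖ => hdrift' _ hϖ) t
  refine (meas_ge_le_ofReal_integral_min_div (hB.comp (measurable_recursiveProcess hG' hω t))
    (fun ϖ => hB_nonneg _) hc).trans ?_
  gcongr
  exact hE.trans (min_le_left _ _)

theorem ofReal_one_sub_le_measure_forall_comp_recursiveProcess_lt {Ω X W : Type*}
    {mΩ : MeasurableSpace Ω} [MeasurableSpace X] [MeasurableSpace W] {μ : Measure Ω}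
    [IsProbabilityMeasure μ] {d : Measure W} [IsProbabilityMeasure d] {G : X → W → X}
    (hG : Measurable (Function.uncurry G)) {ω : ℕ → Ω → W} (hω : ∀ t, Measurable (ω t))
    (hind : iIndepFun ω μ) (hlaw : ∀ t, μ.map (ω t) = d) {K : Set X}
    (hGK : ∀ᵐ w ∂d, ∀ x ∈ K, G x w ∈ K) {x₀ : X} (hx₀ : x₀ ∈ K) {B : X → ℝ} (hB : Measurable B)
    (hB_nonneg : ∀ x, 0 ≤ B x) {C : ℝ} (hB_le : ∀ x, B x ≤ C) {c : ℝ} (hc : 0 < c)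
    (hdrift : ∀ x ∈ K, B x < c → ∫ w, B (G x w) ∂d ≤ B x) :
    ENNReal.ofReal (1 - B x₀ / c) ≤ μ {ϖ | ∀ t, B (recursiveProcess G x₀ ω t ϖ) < c} := by
  set A := {x | c ≤ B x}
  set y := recursiveProcess (stopDynamics G A) x₀ ω
  have hexit_meas : MeasurableSet {ϖ | ∃ t, c ≤ B (recursiveProcess G x₀ ω t ϖ)} := by
    simp only [Set.ofPred_exists]
    exact .iUnion fun t =>
      measurableSet_le measurable_const (hB.comp (measurable_recursiveProcess hG hω t))
  have hexit : μ {ϖ | ∃ t, c ≤ B (recursiveProcess G x₀ ω t ϖ)} ≤ ENNReal.ofReal (B x₀ / c) :=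
    calc μ {ϖ | ∃ t, c ≤ B (recursiveProcess G x₀ ω t ϖ)} ≤ μ (⋃ t, {ϖ | y t ϖ ∈ A}) :=
          measure_mono fun ϖ hϖ => Set.mem_iUnion.2 (exists_recursiveProcess_stopDynamics_mem hϖ)
      _ = ⨆ t, μ {ϖ | y t ϖ ∈ A} := monotone_recursiveProcess_stopDynamics_mem.measure_iUnion
      _ ≤ ENNReal.ofReal (B x₀ / c) := iSup_le
          (measure_le_comp_recursiveProcess_stopDynamics_le hG hω hind hlaw hGK hx₀ hB hB_nonneg
            hB_le hc hdrift)
  have hstay : {ϖ | ∀ t, B (recursiveProcess G x₀ ω t ϖ) < c} =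
      {ϖ | ∃ t, c ≤ B (recursiveProcess G x₀ ω t ϖ)}ᶜ := by
    ext; simp
  rw [hstay, prob_compl_eq_one_sub hexit_meas,
    ENNReal.ofReal_sub _ (div_nonneg (hB_nonneg _) hc.le), ENNReal.ofReal_one]
  exact tsub_le_tsub_left hexit 1

theorem stochastic_barrier_function_certifies_safety_general
    {m n q : ℕ}
    (𝒳 : Set (Fin m → ℝ)) (hXcpt : IsCompact 𝒳)
    (f : (Fin m → ℝ) → (Fin n → ℝ) → (Fin q → ℝ) → (Fin m → ℝ))
    (hf : Measurable fun xuw : (Fin m → ℝ) × (Fin n → ℝ) × (Fin q → ℝ) =>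
      f xuw.1 xuw.2.1 xuw.2.2)
    (π : (Fin m → ℝ) → (Fin n → ℝ)) (hπ : Measurable π)
    (d : Measure (Fin q → ℝ)) [IsProbabilityMeasure d]
    (hinv : ∀ x ∈ 𝒳, ∀ w ∈ measureSupport d, f x (π x) w ∈ 𝒳)
    (X0 Xu : Set (Fin m → ℝ))
    (hX0sub : X0 ⊆ 𝒳) (hXusub : Xu ⊆ 𝒳)
    (p : ℝ) (hp1 : p < 1)
    {Ω : Type*} {m0 : MeasurableSpace Ω} (μ : Measure Ω) [IsProbabilityMeasure μ]
    (ω : ℕ → Ω → (Fin q → ℝ))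
    (hωmeas : ∀ t, Measurable (ω t))
    (hωindep : iIndepFun ω μ)
    (hωlaw : ∀ t, μ.map (ω t) = d)
    (x₀ : Fin m → ℝ) (hx₀ : x₀ ∈ X0)
    (traj : ℕ → Ω → (Fin m → ℝ))
    (htraj0 : ∀ ϖ, traj 0 ϖ = x₀)
    (htraj : ∀ t ϖ, traj (t + 1) ϖ = f (traj t ϖ) (π (traj t ϖ)) (ω t ϖ))
    (V : (Fin m → ℝ) → ℝ) (hVcont : ContinuousOn V 𝒳)
    (hVnonneg : ∀ x ∈ 𝒳, 0 ≤ V x)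
    (hVinit : ∀ x ∈ X0, V x ≤ 1)
    (hVunsafe : ∀ x ∈ Xu, 1 / (1 - p) ≤ V x)
    (hVdec : ∀ x ∈ 𝒳, V x ≤ 1 / (1 - p) →
      ∫ w, V (f x (π x) w) ∂d ≤ V x) :
    ENNReal.ofReal p ≤ μ {ϖ | ∀ t : ℕ, traj t ϖ ∉ Xu} := by
  set c := 1 / (1 - p)
  have hc : 0 < c := one_div_pos.2 (sub_pos.2 hp1)
  set B := 𝒳.indicator V
  have hBV : ∀ x ∈ 𝒳, B x = V x := fun x hx => Set.indicator_of_mem hx V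
  obtain ⟨C, hC⟩ := hXcpt.bddAbove_image hVcont
  have hB_le : ∀ x, B x ≤ max C 0 := Set.indicator_le'
    (fun x hx => (hC ⟨x, hx, rfl⟩).trans (le_max_left _ _)) fun _ _ => le_max_right _ _
  have hG : Measurable (Function.uncurry fun x w => f x (π x) w) :=
    hf.comp (measurable_fst.prodMk ((hπ.comp measurable_fst).prodMk measurable_snd))
  have hG𝒳 : ∀ᵐ w ∂d, ∀ x ∈ 𝒳, f x (π x) w ∈ 𝒳 := by
    filter_upwards [ae_mem_measureSupport d] with w hw x hx using hinv x hx w hw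
  have hdrift : ∀ x ∈ 𝒳, B x < c → ∫ w, B (f x (π x) w) ∂d ≤ B x := by
    intro x hx hlt
    rw [integral_congr_ae (hG𝒳.mono fun w hw => hBV _ (hw x hx)), hBV x hx]
    exact hVdec x hx (hBV x hx ▸ hlt.le)
  have hstay := ofReal_one_sub_le_measure_forall_comp_recursiveProcess_lt hG hωmeas hωindep hωlaw
    hG𝒳 (hX0sub hx₀) (hVcont.measurable_indicator hXcpt.isClosed.measurableSet)
    (Set.indicator_nonneg hVnonneg) hB_le hc hdrift
  rw [← eq_recursiveProcess htraj0 htraj] at hstay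
  have hB₀ : B x₀ / c ≤ 1 - p := by
    rw [hBV _ (hX0sub hx₀), div_div_eq_mul_div, div_one]
    exact mul_le_of_le_one_left (sub_nonneg.2 hp1.le) (hVinit x₀ hx₀)
  calc ENNReal.ofReal p ≤ ENNReal.ofReal (1 - B x₀ / c) := by gcongr; linarith
    _ ≤ μ {ϖ | ∀ t, B (traj t ϖ) < c} := hstay
    _ ≤ μ {ϖ | ∀ t, traj t ϖ ∉ Xu} :=
        measure_mono fun ϖ hϖ t hu => (hϖ t).not_ge (hBV _ (hXusub hu) ▸ hVunsafe _ hu)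

/-- Probabilistic safety via stochastic barrier functions: a continuous function `V` that is
nonnegative on `𝒳`, at most `1` on the initial set, at least `1/(1-p)` on the unsafe set, and
non-increasing in one-step expectation below the level `1/(1-p)`, certifies that the trajectory
process started at `x₀ ∈ X0` avoids the unsafe set forever with probability at least `p`. -/
theorem stochastic_barrier_function_certifies_safety
    {m n q : ℕ}
    (𝒳 : Set (Fin m → ℝ)) (hXcpt : IsCompact 𝒳) (hXmeas : MeasurableSet 𝒳)
    (f : (Fin m → ℝ) → (Fin n → ℝ) → (Fin q → ℝ) → (Fin m → ℝ))
    (hf : Measurable fun xuw : (Fin m → ℝ) × (Fin n → ℝ) × (Fin q → ℝ) =>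
      f xuw.1 xuw.2.1 xuw.2.2)
    (π : (Fin m → ℝ) → (Fin n → ℝ)) (hπ : Measurable π)
    (d : Measure (Fin q → ℝ)) [IsProbabilityMeasure d]
    (hinv : ∀ x ∈ 𝒳, ∀ w ∈ measureSupport d, f x (π x) w ∈ 𝒳)
    (X0 Xu : Set (Fin m → ℝ))
    (hX0sub : X0 ⊆ 𝒳) (hXusub : Xu ⊆ 𝒳)
    (hX0meas : MeasurableSet X0) (hXumeas : MeasurableSet Xu)
    (p : ℝ) (hp0 : 0 ≤ p) (hp1 : p < 1)
    {Ω : Type*} {m0 : MeasurableSpace Ω} (μ : Measure Ω) [IsProbabilityMeasure μ]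
    (ω : ℕ → Ω → (Fin q → ℝ))
    (hωmeas : ∀ t, Measurable (ω t))
    (hωindep : iIndepFun ω μ)
    (hωlaw : ∀ t, μ.map (ω t) = d)
    (x₀ : Fin m → ℝ) (hx₀ : x₀ ∈ X0)
    (traj : ℕ → Ω → (Fin m → ℝ))
    (htraj0 : ∀ ϖ, traj 0 ϖ = x₀)
    (htraj : ∀ t ϖ, traj (t + 1) ϖ = f (traj t ϖ) (π (traj t ϖ)) (ω t ϖ))
    (V : (Fin m → ℝ) → ℝ) (hVcont : ContinuousOn V 𝒳)
    (hVnonneg : ∀ x ∈ 𝒳, 0 ≤ V x)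
    (hVinit : ∀ x ∈ X0, V x ≤ 1)
    (hVunsafe : ∀ x ∈ Xu, 1 / (1 - p) ≤ V x)
    (hVdec : ∀ x ∈ 𝒳, V x ≤ 1 / (1 - p) →
      ∫ w, V (f x (π x) w) ∂d ≤ V x) :
    ENNReal.ofReal p ≤ μ {ϖ | ∀ t : ℕ, traj t ϖ ∉ Xu} :=
  stochastic_barrier_function_certifies_safety_general 𝒳 hXcpt f hf π hπ d hinv X0 Xu hX0sub hXusub
    p hp1 (m0 := m0) μ ω hωmeas hωindep hωlaw x₀ hx₀ traj htraj0 htraj V hVcont hVnonneg hVinit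
    hVunsafe hVdec
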